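/- Given lower quasiseparable generators q_k (r_k×n_k), a_k (r_k×r_{k-1}), p_k (n_k×r_{k-1}) of a block lower triangular part, applying the order-reduction procedure (a forward sweep of LQ decompositions q_1 = L_1 q_1′ with q_1′(q_1′)* = I, [a_k L_{k-1} q_k] = L_k [a_k′ q_k′] with orthonormal rows, p_k′ = p_k L_{k-1}, followed by a backward sweep of QR decompositions) produces new generators q_k″, a_k″, p_k″ that represent the same strictly lower triangular part, i.e., p_i″ a_{i-1}″ ··· a_{j+1}″ q_j″ = p_i a_{i-1} ··· a_{j+1} q_j for all i > j. -/

import Mathlib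

/-!
Both sweeps are changes of basis in the state spaces of the generators. If `q_j = T_j q'_j`,
`a_k T_{k-1} = T_k a'_k` and `p'_i = p_i T_{i-1}`, then the matrices `T` can be pushed through
the product `p_i a_{i-1} ⋯ a_{j+1} q_j` from right to left, turning it into
`p'_i a'_{i-1} ⋯ a'_{j+1} q'_j`. The forward sweep is such a change with `T = L`, and the
backward sweep one with `T = S` from the new generators `p″, a″, q″` to `p', a', q'`.
-/

open Matrix

/-- The "transfer" product `a_{j+e} ⋯ a_{j+1} q_j` of lower quasiseparable generators. -/
def lowT (r m : ℕ → ℕ)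
    (q : ∀ k : ℕ, Matrix (Fin (r k)) (Fin (m k)) ℝ)
    (a : ∀ k : ℕ, Matrix (Fin (r k)) (Fin (r (k - 1))) ℝ)
    (j : ℕ) : (e : ℕ) → Matrix (Fin (r (j + e))) (Fin (m j)) ℝ
  | 0 => q j
  | e + 1 =>
    (show Matrix (Fin (r (j + e + 1))) (Fin (r (j + e))) ℝ from a (j + e + 1)) *
      lowT r m q a j e

section ChangeOfBasis

variable {r s m : ℕ → ℕ}
  {q : ∀ k, Matrix (Fin (r k)) (Fin (m k)) ℝ} {a : ∀ k, Matrix (Fin (r k)) (Fin (r (k - 1))) ℝ}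
  {p : ∀ k, Matrix (Fin (m k)) (Fin (r (k - 1))) ℝ}
  {q' : ∀ k, Matrix (Fin (s k)) (Fin (m k)) ℝ} {a' : ∀ k, Matrix (Fin (s k)) (Fin (s (k - 1))) ℝ}
  {p' : ∀ k, Matrix (Fin (m k)) (Fin (s (k - 1))) ℝ}
  {T : ∀ k, Matrix (Fin (r k)) (Fin (s k)) ℝ} {j : ℕ}

theorem lowT_eq_mul_lowT (hq : q j = T j * q' j) :
    ∀ {e : ℕ}, (∀ k, 1 ≤ k → k ≤ j + e → a k * T (k - 1) = T k * a' k) →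
      lowT r m q a j e = T (j + e) * lowT s m q' a' j e
  | 0, _ => hq
  | e + 1, ha => by
    rw [lowT, lowT, lowT_eq_mul_lowT hq fun k hk₁ hk₂ => ha k hk₁ (by omega)]
    simp only [← Matrix.mul_assoc]
    exact congrArg (· * _) (ha (j + e + 1) (by omega) le_rfl)

theorem mul_lowT_submatrix_eq {i e : ℕ} (he : i = j + e + 1) (hq : q j = T j * q' j)
    (ha : ∀ k, 1 ≤ k → k ≤ j + e → a k * T (k - 1) = T k * a' k) (hp : p' i = p i * T (i - 1)) :
    p i * (lowT r m q a j e).submatrix (Fin.cast (congrArg r (by omega : i - 1 = j + e))) id =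
      p' i * (lowT s m q' a' j e).submatrix
        (Fin.cast (congrArg s (by omega : i - 1 = j + e))) id := by
  subst he
  rw [hp, lowT_eq_mul_lowT hq ha]
  exact (Matrix.mul_assoc (p (j + e + 1)) (T (j + e)) (lowT s m q' a' j e)).symm

end ChangeOfBasis

/-- the two-sweep order-reduction procedure (forward sweep of LQ
decompositions, backward sweep of QR decompositions) applied to lower quasiseparable
generators `q, a, p` produces new generators `q″, a″, p″` representing the same
strictly lower triangular part: `p_i a_{i-1}⋯a_{j+1} q_j = p″_i a″_{i-1}⋯a″_{j+1} q″_j`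
for all `i > j` (0-based indexing over `n` blocks). -/
theorem order_reduction_preserves_lower_part
    (n : ℕ) (m r r' r'' : ℕ → ℕ)
    (q : ∀ k : ℕ, Matrix (Fin (r k)) (Fin (m k)) ℝ)
    (a : ∀ k : ℕ, Matrix (Fin (r k)) (Fin (r (k - 1))) ℝ)
    (p : ∀ k : ℕ, Matrix (Fin (m k)) (Fin (r (k - 1))) ℝ)
    (L : ∀ k : ℕ, Matrix (Fin (r k)) (Fin (r' k)) ℝ)
    (q' : ∀ k : ℕ, Matrix (Fin (r' k)) (Fin (m k)) ℝ)
    (a' : ∀ k : ℕ, Matrix (Fin (r' k)) (Fin (r' (k - 1))) ℝ)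
    (p' : ∀ k : ℕ, Matrix (Fin (m k)) (Fin (r' (k - 1))) ℝ)
    (S : ∀ k : ℕ, Matrix (Fin (r'' k)) (Fin (r' k)) ℝ)
    (q'' : ∀ k : ℕ, Matrix (Fin (r'' k)) (Fin (m k)) ℝ)
    (a'' : ∀ k : ℕ, Matrix (Fin (r'' k)) (Fin (r'' (k - 1))) ℝ)
    (p'' : ∀ k : ℕ, Matrix (Fin (m k)) (Fin (r'' (k - 1))) ℝ)
    -- forward sweep (LQ decompositions with orthonormal rows):
    (hq0 : q 0 = L 0 * q' 0)
    (hfwdA : ∀ k : ℕ, 1 ≤ k → k < n → a k * L (k - 1) = L k * a' k)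
    (hfwdQ : ∀ k : ℕ, 1 ≤ k → k < n → q k = L k * q' k)
    (hfwdP : ∀ k : ℕ, 1 ≤ k → k < n → p' k = p k * L (k - 1))
    -- backward sweep (QR decompositions with orthonormal columns):
    (hbwdTop : p' (n - 1) = p'' (n - 1) * S (n - 1 - 1))
    (hbwdP : ∀ k : ℕ, 1 ≤ k → k < n - 1 → p' k = p'' k * S (k - 1))
    (hbwdA : ∀ k : ℕ, 1 ≤ k → k < n - 1 → S k * a' k = a'' k * S (k - 1))
    (hbwdQ : ∀ k : ℕ, k < n - 1 → q'' k = S k * q' k) :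
    ∀ (i j : ℕ) (hj : j < i) (hi : i < n),
      p i * (lowT r m q a j (i - 1 - j)).submatrix
          (Fin.cast (congrArg r (by omega : i - 1 = j + (i - 1 - j)))) id =
      p'' i * (lowT r'' m q'' a'' j (i - 1 - j)).submatrix
          (Fin.cast (congrArg r'' (by omega : i - 1 = j + (i - 1 - j)))) id := by
  intro i j hj hi
  have hfwdQj : q j = L j * q' j := by
    rcases Nat.eq_zero_or_pos j with rfl | hj0
    · exact hq0
    · exact hfwdQ j hj0 (by omega)
  have hback : p' i = p'' i * S (i - 1) := by
    rcases Nat.lt_or_ge i (n - 1) with hlt | hge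
    · exact hbwdP i (by omega) hlt
    · obtain rfl : i = n - 1 := by omega
      exact hbwdTop
  have hfwd := mul_lowT_submatrix_eq (by omega : i = j + (i - 1 - j) + 1) hfwdQj
    (fun k hk₁ hk₂ => hfwdA k hk₁ (by omega)) (hfwdP i (by omega) hi)
  have hbwd := mul_lowT_submatrix_eq (by omega : i = j + (i - 1 - j) + 1)
    (hbwdQ j (by omega)) (fun k hk₁ hk₂ => (hbwdA k hk₁ (by omega)).symm) hback
  exact hfwd.trans hbwd.symm
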